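/- arXiv:0907.4640 — 4 statements merged into one kernel-verified Lean document; each statement's English description precedes it below -/
import Mathlib

section
/- Invariance of well-formedness under the natural semantics of λ_let: if the configuration ⟨Ψ⟩M is closed and X-good and the judgment ⟨Ψ⟩M ⇓_X ⟨Φ⟩V is derivable, then ⟨Φ⟩V is closed and X-good, the domain of Ψ is contained in the domain of Φ, and every judgment occurring in the derivation is promising (i.e., its configuration is closed and good with respect to its variable set). -/
/-! # The acyclic call-by-need calculus λ_let -/

inductive Expr : Type
  | var : ℕ → Expr
  | lam : ℕ → Expr → Expr
  | app : Expr → Expr → Expr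
  | letE : ℕ → Expr → Expr → Expr
  deriving DecidableEq

namespace Expr

/-- free variables -/
def FV : Expr → Finset ℕ
  | var x => {x}
  | lam x M => FV M \ {x}
  | app M N => FV M ∪ FV N
  | letE x M N => FV M ∪ (FV N \ {x})

/-- `subst M x x'` is `M[x'/x]`: rename free occurrences of `x` to `x'`. -/
def subst : Expr → ℕ → ℕ → Expr
  | var y, x, x' => if y = x then var x' else var y
  | lam y M, x, x' => if y = x then lam y M else lam y (subst M x x')
  | app M N, x, x' => app (subst M x x') (subst N x x')
  | letE y M N, x, x' => letE y (subst M x x') (if y = x then N else subst N x x')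

def IsValue : Expr → Prop
  | lam _ _ => True
  | _ => False

inductive IsAnswer : Expr → Prop
  | val (x M) : IsAnswer (lam x M)
  | letE (x M A) : IsAnswer A → IsAnswer (Expr.letE x M A)

/-- a program is a closed expression -/
def Closed (M : Expr) : Prop := FV M = ∅

end Expr

open Expr

/-- Evaluation contexts E ::= [] | E M | let x = M in E | let x = E in E'[x]. -/
inductive Ctx : Type
  | hole : Ctx
  | appL : Ctx → Expr → Ctx
  | letB : ℕ → Expr → Ctx → Ctx
  | letD : ℕ → Ctx → Ctx → Ctx
  deriving DecidableEq

namespace Ctx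

def plug : Ctx → Expr → Expr
  | hole, M => M
  | appL E N, M => .app (plug E M) N
  | letB x N E, M => .letE x N (plug E M)
  | letD x E E', M => .letE x (plug E M) (plug E' (.var x))

/-- let-bound variables of a context -/
def LBV : Ctx → Finset ℕ
  | hole => ∅
  | appL E _ => LBV E
  | letB x _ E => insert x (LBV E)
  | letD x E E' => insert x (LBV E ∪ LBV E')

/-- `comp C E` replaces the hole of `C` by `E`. -/
def comp : Ctx → Ctx → Ctx
  | hole, E => E
  | appL C N, E => appL (comp C E) N
  | letB x N C, E => letB x N (comp C E)
  | letD x C E', E => letD x (comp C E) E'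

end Ctx

/-- The notion of reduction of λ_let: β_need, lift, deref, assoc. -/
inductive Redex : Expr → Expr → Prop
  | beta (x M N) : Redex (.app (.lam x M) N) (.letE x N M)
  | lift (x M A N) : IsAnswer A →
      Redex (.app (.letE x M A) N) (.letE x M (.app A N))
  | deref (x V E) : IsValue V →
      Redex (.letE x V (Ctx.plug E (.var x))) (.letE x V (Ctx.plug E V))
  | assoc (x y M A E) : IsAnswer A →
      Redex (.letE x (.letE y M A) (Ctx.plug E (.var x)))
            (.letE y M (.letE x A (Ctx.plug E (.var x))))

/-- standard reduction -/
def Step (M N : Expr) : Prop :=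
  ∃ E M' N', Redex M' N' ∧ M = Ctx.plug E M' ∧ N = Ctx.plug E N'

def Steps : Expr → Expr → Prop := Relation.ReflTransGen Step

/-- `n`-step standard reduction -/
def StepN : ℕ → Expr → Expr → Prop
  | 0, M, N => M = N
  | n + 1, M, N => ∃ M', Step M M' ∧ StepN n M' N

/-! ## Heaps and the natural semantics -/

abbrev Heap := List (ℕ × Expr)

def heapDom (Ψ : Heap) : Finset ℕ := (Ψ.map Prod.fst).toFinset

def heapClosedFrom : Finset ℕ → Heap → Prop
  | _, [] => True
  | S, (x, M) :: rest => FV M ⊆ S ∧ heapClosedFrom (insert x S) rest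

/-- the configuration ⟨Ψ⟩M is closed -/
def ConfigClosed (Ψ : Heap) (M : Expr) : Prop :=
  heapClosedFrom ∅ Ψ ∧ FV M ⊆ heapDom Ψ

/-- the configuration with heap Ψ is X-good -/
def ConfigGood (Ψ : Heap) (X : Finset ℕ) : Prop :=
  (Ψ.map Prod.fst).Nodup ∧ Disjoint (heapDom Ψ) X

/-- The natural semantics ⟨Ψ⟩M ⇓_X ⟨Φ⟩V of λ_let. -/
inductive Eval : Heap → Expr → Finset ℕ → Heap → Expr → Prop
  | lam (Ψ x M X) : Eval Ψ (.lam x M) X Ψ (.lam x M)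
  | app {Ψ M₁ M₂ X Φ x N x' Ψ' V} :
      Eval Ψ M₁ X Φ (.lam x N) →
      x' ∉ heapDom Φ ∪ X ∪ FV M₂ ∪ FV N →
      Eval (Φ ++ [(x', M₂)]) (subst N x x') X Ψ' V →
      Eval Ψ (.app M₁ M₂) X Ψ' V
  | letE {Ψ x N M X x' Φ V} :
      x' ∉ heapDom Ψ ∪ X ∪ FV N ∪ FV M →
      Eval (Ψ ++ [(x', N)]) (subst M x x') X Φ V →
      Eval Ψ (.letE x N M) X Φ V
  | var {Ψ M X Φ Ψ' V x} :
      Eval Ψ M (X ∪ {x} ∪ heapDom Φ) Ψ' V →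
      Eval (Ψ ++ (x, M) :: Φ) (.var x) X (Ψ' ++ (x, V) :: Φ) V

/-! ## Structured heaps and the instrumented natural semantics -/

inductive Frame : Type
  | appF : Expr → Frame
  | letF : ℕ → Expr → Frame
  | demF : ℕ → Ctx → Frame

/-- A structured heap: a sequence of frames, the head being the innermost frame. -/
abbrev SHeap := List Frame

namespace Frame

def plug : Frame → Expr → Expr
  | appF N, M => .app M N
  | letF x N, M => .letE x N M
  | demF x E, M => .letE x M (Ctx.plug E (.var x))

def lbv : Frame → Finset ℕ
  | appF _ => ∅
  | letF x _ => {x}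
  | demF _ _ => ∅

def IsLet : Frame → Prop
  | letF _ _ => True
  | _ => False

def toCtx : Frame → Ctx
  | appF N => .appL .hole N
  | letF x N => .letB x N .hole
  | demF x E => .letD x .hole E

end Frame

def slbv (S : SHeap) : Finset ℕ := S.foldr (fun F acc => F.lbv ∪ acc) ∅

/-- plugging an expression into the composed evaluation context of a structured heap -/
def splug : SHeap → Expr → Expr
  | [], M => M
  | F :: S, M => splug S (F.plug M)

/-- the evaluation context denoted by a structured heap -/
def toCtx : SHeap → Ctx
  | [] => .hole
  | F :: S => (toCtx S).comp F.toCtx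

/-- well-formedness of structured heaps -/
def swf : SHeap → Prop
  | [] => True
  | .appF M :: S => FV M ⊆ slbv S ∧ swf S
  | .letF x M :: S => FV M ⊆ slbv S ∧ x ∉ slbv S ∧ swf S
  | .demF x E :: S => FV (Ctx.plug E (.var x)) ⊆ insert x (slbv S) ∧ x ∉ slbv S ∧ swf S

/-- well-formedness of structured configurations -/
def ConfigWF (S : SHeap) (M : Expr) : Prop := swf S ∧ FV M ⊆ slbv S

/-- Θ: a (reversed) sequence of let-frames -/
def IsLets (Θ : SHeap) : Prop := ∀ F ∈ Θ, F.IsLet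

/-- The instrumented natural semantics of λ_let. -/
inductive IEval : SHeap → Expr → SHeap → Expr → Prop
  | lam (S x M) : IEval S (.lam x M) S (.lam x M)
  | app {S M₁ M₂ S₁ Θ x N x' S₂ V} :
      IsLets Θ →
      IEval (.appF M₂ :: S) M₁ (Θ ++ .appF M₂ :: S₁) (.lam x N) →
      x' ∉ slbv (Θ ++ S₁) ∪ FV M₂ ∪ FV N →
      IEval (.letF x' M₂ :: (Θ ++ S₁)) (subst N x x') S₂ V →
      IEval S (.app M₁ M₂) S₂ V
  | letin {S x N M x' S' V} :
      x' ∉ slbv S ∪ FV N ∪ FV M →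
      IEval (.letF x' N :: S) (subst M x x') S' V →
      IEval S (.letE x N M) S' V
  | var {S S₁ S₂ Θ x M V} :
      IsLets Θ →
      IEval (.demF x (toCtx S₁) :: S) M (Θ ++ .demF x (toCtx S₁) :: S₂) V →
      IEval (S₁ ++ .letF x M :: S) (.var x) (S₁ ++ .letF x V :: (Θ ++ S₂)) V

/-- flattening of a structured heap into an ordered heap (outermost binding first) -/
def decomp : SHeap → Heap
  | [] => []
  | .letF x M :: S => decomp S ++ [(x, M)]
  | _ :: S => decomp S

/-- frames agree up to updating of a let-bound expression -/
def FrameMatch (F F' : Frame) : Prop :=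
  F = F' ∨ ∃ x M N, F = .letF x M ∧ F' = .letF x N

/-- the preorder ⊑ on structured heaps, via strictly monotone injections -/
def HpLe (S S' : SHeap) : Prop :=
  ∃ ι : Fin S.length → Fin S'.length, StrictMono ι ∧
    (∀ i, FrameMatch (S.get i) (S'.get (ι i))) ∧
    (∀ j : Fin S'.length, (∀ i, ι i ≠ j) → ∃ x M, S'.get j = Frame.letF x M)

/-! ## Nestings of let-bindings Θ ::= [] | Θ[let x = M in []] -/

/-- a nesting of let-bindings; the head is the innermost binding -/
abbrev LetNest := List (ℕ × Expr)

def tplug : LetNest → Expr → Expr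
  | [], M => M
  | (x, N) :: Θ, M => tplug Θ (.letE x N M)

/-- ⌊Θ⌋ : flattening a let-nesting into a heap (outermost binding first) -/
def theapOf (Θ : LetNest) : Heap := Θ.reverse

/-! ## α-equivalence -/

inductive AlphaEq : Expr → Expr → Prop
  | var (x) : AlphaEq (.var x) (.var x)
  | app {M M' N N'} : AlphaEq M M' → AlphaEq N N' → AlphaEq (.app M N) (.app M' N')
  | lam {x y M N} :
      (∀ z, z ∉ FV M ∪ FV N ∪ {x, y} → AlphaEq (subst M x z) (subst N y z)) →
      AlphaEq (.lam x M) (.lam y N)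
  | letE {x y M M' N N'} : AlphaEq M M' →
      (∀ z, z ∉ FV N ∪ FV N' ∪ {x, y} → AlphaEq (subst N x z) (subst N' y z)) →
      AlphaEq (.letE x M N) (.letE y M' N')

/-! ## β_need-rooted reductions -/

def BetaRooted (N M M' : Expr) : Prop :=
  ∃ Θ x N', M = tplug Θ (.app (.lam x N') N) ∧ M' = tplug Θ (.letE x N N')

/-- `n`-step reduction preserving a β_need-root with argument `N` -/
def StepNAvoid (N : Expr) : ℕ → Expr → Expr → Prop
  | 0, M, M'' => M = M''
  | n + 1, M, M'' => ∃ M', Step M M' ∧ ¬ BetaRooted N M M' ∧ StepNAvoid N n M' M''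

/-- a judgment is promising if its configuration is closed and good -/
def Promising (Ψ : Heap) (M : Expr) (X : Finset ℕ) : Prop :=
  ConfigClosed Ψ M ∧ ConfigGood Ψ X

/-- Derivability in the natural semantics with every judgment in the
derivation being promising. -/
inductive EvalP : Heap → Expr → Finset ℕ → Heap → Expr → Prop
  | lam (Ψ x M X) : Promising Ψ (.lam x M) X → EvalP Ψ (.lam x M) X Ψ (.lam x M)
  | app {Ψ M₁ M₂ X Φ x N x' Ψ' V} :
      Promising Ψ (.app M₁ M₂) X →
      EvalP Ψ M₁ X Φ (.lam x N) →
      x' ∉ heapDom Φ ∪ X ∪ FV M₂ ∪ FV N →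
      EvalP (Φ ++ [(x', M₂)]) (subst N x x') X Ψ' V →
      EvalP Ψ (.app M₁ M₂) X Ψ' V
  | letE {Ψ x N M X x' Φ V} :
      Promising Ψ (.letE x N M) X →
      x' ∉ heapDom Ψ ∪ X ∪ FV N ∪ FV M →
      EvalP (Ψ ++ [(x', N)]) (subst M x x') X Φ V →
      EvalP Ψ (.letE x N M) X Φ V
  | var {Ψ M X Φ Ψ' V x} :
      Promising (Ψ ++ (x, M) :: Φ) (.var x) X →
      EvalP Ψ M (X ∪ {x} ∪ heapDom Φ) Ψ' V →
      EvalP (Ψ ++ (x, M) :: Φ) (.var x) X (Ψ' ++ (x, V) :: Φ) V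

/-! Strengthened to the invariant `Promising`, the claim follows by induction on the derivation.
The fresh names chosen by the application and let rules keep the heap good. In the variable rule
the bound expression is evaluated in the prefix `Ψ` while avoiding `x` and the domain of the suffix
`Φ`, so the new prefix `Ψ'` stays disjoint from them, and `Φ` stays closed because the domain of the
prefix only grows. -/

@[simp]
lemma heapDom_nil : heapDom [] = ∅ := rfl

@[simp]
lemma heapDom_cons (x : ℕ) (M : Expr) (Ψ : Heap) :
    heapDom ((x, M) :: Ψ) = insert x (heapDom Ψ) := by
  simp [heapDom]

@[simp]
lemma heapDom_append (Ψ Φ : Heap) : heapDom (Ψ ++ Φ) = heapDom Ψ ∪ heapDom Φ := by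
  simp [heapDom]

lemma heapDom_subset_append (Ψ Φ : Heap) : heapDom Ψ ⊆ heapDom (Ψ ++ Φ) := by
  rw [heapDom_append]
  exact Finset.subset_union_left

lemma heapClosedFrom_mono : ∀ {Ψ : Heap} {S T : Finset ℕ}, S ⊆ T →
    heapClosedFrom S Ψ → heapClosedFrom T Ψ
  | [], _, _, _, _ => trivial
  | (_, _) :: _, _, _, hST, ⟨hM, hrest⟩ =>
    ⟨hM.trans hST, heapClosedFrom_mono (Finset.insert_subset_insert _ hST) hrest⟩

lemma heapClosedFrom_append : ∀ (Ψ Φ : Heap) (S : Finset ℕ),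
    heapClosedFrom S (Ψ ++ Φ) ↔ heapClosedFrom S Ψ ∧ heapClosedFrom (S ∪ heapDom Ψ) Φ
  | [], Φ, S => by simp [heapClosedFrom]
  | (x, M) :: Ψ, Φ, S => by
    simp only [List.cons_append, heapClosedFrom, heapClosedFrom_append Ψ Φ, heapDom_cons,
      Finset.union_insert, Finset.insert_union, and_assoc]

lemma FV_subst_subset (M : Expr) (x x' : ℕ) :
    FV (subst M x x') ⊆ insert x' (FV M \ {x}) := by
  induction M with
  | var y => unfold subst; split_ifs <;> simp_all [FV]
  | lam y M ih =>
    intro z hz; have := @ih z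
    unfold subst at hz; split_ifs at hz <;> simp_all [FV]
  | app M N ihM ihN =>
    intro z hz; have := @ihM z; have := @ihN z
    simp_all [FV, subst]; tauto
  | letE y M N ihM ihN =>
    intro z hz; have := @ihM z; have := @ihN z
    unfold subst at hz; split_ifs at hz <;> simp_all [FV] <;> tauto

lemma configGood_append {Ψ Φ : Heap} {X : Finset ℕ} :
    ConfigGood (Ψ ++ Φ) X ↔ ConfigGood Ψ (X ∪ heapDom Φ) ∧ ConfigGood Φ X := by
  have hdisj : Disjoint (heapDom Ψ) (heapDom Φ) ↔ (Ψ.map Prod.fst).Disjoint (Φ.map Prod.fst) :=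
    List.disjoint_toFinset_iff_disjoint
  simp only [ConfigGood, heapDom_append, List.map_append, List.nodup_append',
    Finset.disjoint_union_left, Finset.disjoint_union_right, hdisj]
  tauto

lemma configGood_cons {x : ℕ} {M : Expr} {Φ : Heap} {X : Finset ℕ} :
    ConfigGood ((x, M) :: Φ) X ↔ ConfigGood Φ (insert x X) ∧ x ∉ X := by
  have hmem : x ∈ heapDom Φ ↔ x ∈ Φ.map Prod.fst := List.mem_toFinset
  simp only [ConfigGood, heapDom_cons, List.map_cons, List.nodup_cons, ← hmem,
    Finset.disjoint_insert_left, Finset.disjoint_insert_right]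
  tauto

lemma ConfigGood.snoc {Ψ : Heap} {X : Finset ℕ} {x : ℕ} (N : Expr) (h : ConfigGood Ψ X)
    (hx : x ∉ heapDom Ψ ∪ X) : ConfigGood (Ψ ++ [(x, N)]) X := by
  rw [Finset.mem_union, not_or] at hx
  refine configGood_append.2 ⟨⟨h.1, ?_⟩, configGood_cons.2 ⟨⟨List.nodup_nil, by simp⟩, hx.2⟩⟩
  simpa [Finset.disjoint_union_right, h.2] using hx.1

lemma configClosed_snoc_subst {Ψ : Heap} {N M : Expr} {x x' : ℕ} (hΨ : heapClosedFrom ∅ Ψ)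
    (hN : FV N ⊆ heapDom Ψ) (hM : FV M \ {x} ⊆ heapDom Ψ) :
    ConfigClosed (Ψ ++ [(x', N)]) (subst M x x') := by
  refine ⟨(heapClosedFrom_append _ _ _).2 ⟨hΨ, by simpa using hN, trivial⟩, ?_⟩
  rw [heapDom_append, heapDom_cons, heapDom_nil]
  exact (FV_subst_subset M x x').trans
    (Finset.insert_subset (by simp) (hM.trans Finset.subset_union_left))

lemma union_singleton_union_heapDom (X : Finset ℕ) (x : ℕ) (M : Expr) (Φ : Heap) :
    X ∪ {x} ∪ heapDom Φ = X ∪ heapDom ((x, M) :: Φ) := by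
  rw [heapDom_cons, Finset.union_assoc, Finset.singleton_union]

lemma Promising.lookup {Ψ Φ : Heap} {x : ℕ} {M : Expr} {X : Finset ℕ}
    (h : Promising (Ψ ++ (x, M) :: Φ) (.var x) X) : Promising Ψ M (X ∪ {x} ∪ heapDom Φ) := by
  obtain ⟨⟨hc, -⟩, hgood⟩ := h
  obtain ⟨hΨ, hM, -⟩ := (heapClosedFrom_append _ _ _).1 hc
  rw [union_singleton_union_heapDom X x M]
  exact ⟨⟨hΨ, by simpa using hM⟩, (configGood_append.1 hgood).1⟩

lemma Promising.update {Ψ Φ Ψ' : Heap} {x : ℕ} {M V : Expr} {X : Finset ℕ}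
    (h : Promising (Ψ ++ (x, M) :: Φ) (.var x) X) (hV : Promising Ψ' V (X ∪ {x} ∪ heapDom Φ))
    (hsub : heapDom Ψ ⊆ heapDom Ψ') : Promising (Ψ' ++ (x, V) :: Φ) V X := by
  obtain ⟨⟨hc, -⟩, hgood⟩ := h
  obtain ⟨⟨hΨ', hV⟩, hgood'⟩ := hV
  obtain ⟨-, -, hΦ⟩ := (heapClosedFrom_append _ _ _).1 hc
  rw [union_singleton_union_heapDom X x V] at hgood'
  refine ⟨⟨(heapClosedFrom_append _ _ _).2 ⟨hΨ', by simpa using hV, ?_⟩, ?_⟩,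
    configGood_append.2 ⟨hgood', (configGood_append.1 hgood).2⟩⟩
  · exact heapClosedFrom_mono (Finset.insert_subset_insert _ (by simpa using hsub)) hΦ
  · exact hV.trans (heapDom_subset_append _ _)

theorem Eval.preserves_promising {Ψ Φ : Heap} {M V : Expr} {X : Finset ℕ} (h : Eval Ψ M X Φ V)
    (hP : Promising Ψ M X) :
    Promising Φ V X ∧ heapDom Ψ ⊆ heapDom Φ ∧ EvalP Ψ M X Φ V := by
  induction h with
  | lam => exact ⟨hP, subset_rfl, .lam _ _ _ _ hP⟩
  | app _ hx' _ ih₁ ih₂ =>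
    obtain ⟨⟨hΨ, hfv⟩, hgood⟩ := hP
    obtain ⟨hfv₁, hfv₂⟩ := Finset.union_subset_iff.1 hfv
    obtain ⟨⟨⟨hΦ, hN⟩, hgoodΦ⟩, hsub₁, hd₁⟩ := ih₁ ⟨⟨hΨ, hfv₁⟩, hgood⟩
    have hfresh := Finset.notMem_mono (Finset.subset_union_left.trans Finset.subset_union_left) hx'
    obtain ⟨hP', hsub₂, hd₂⟩ := ih₂
      ⟨configClosed_snoc_subst hΦ (hfv₂.trans hsub₁) hN, hgoodΦ.snoc _ hfresh⟩
    exact ⟨hP', hsub₁.trans ((heapDom_subset_append _ _).trans hsub₂),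
      .app ⟨⟨hΨ, hfv⟩, hgood⟩ hd₁ hx' hd₂⟩
  | letE hx' _ ih =>
    obtain ⟨⟨hΨ, hfv⟩, hgood⟩ := hP
    obtain ⟨hN, hM⟩ := Finset.union_subset_iff.1 hfv
    have hfresh := Finset.notMem_mono (Finset.subset_union_left.trans Finset.subset_union_left) hx'
    obtain ⟨hP', hsub, hd⟩ := ih ⟨configClosed_snoc_subst hΨ hN hM, hgood.snoc _ hfresh⟩
    exact ⟨hP', (heapDom_subset_append _ _).trans hsub, .letE ⟨⟨hΨ, hfv⟩, hgood⟩ hx' hd⟩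
  | var _ ih =>
    obtain ⟨hV, hsub, hd⟩ := ih hP.lookup
    refine ⟨hP.update hV hsub, ?_, .var hP hd⟩
    rw [heapDom_append, heapDom_append]
    exact Finset.union_subset_union_left hsub

/-- Invariance of well-formedness under the natural semantics of λ_let. -/
theorem eval_wf_invariant {Ψ Φ : Heap} {M V : Expr} {X : Finset ℕ}
    (hclosed : ConfigClosed Ψ M) (hgood : ConfigGood Ψ X)
    (h : Eval Ψ M X Φ V) :
    ConfigClosed Φ V ∧ ConfigGood Φ X ∧ heapDom Ψ ⊆ heapDom Φ ∧
      EvalP Ψ M X Φ V :=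
  and_assoc.1 (h.preserves_promising ⟨hclosed, hgood⟩)
end

section
/- Monotonic growth of structured heaps in λ_let: if ⟨Σ⟩M is well-formed and ⟨Σ⟩M ⇓ ⟨Σ'⟩V in the instrumented natural semantics, then Σ ⊑ Σ', where ⊑ is the preorder on structured heaps defined via order-preserving injections of frames. -/
open Expr

/- The instrumented semantics only adds let-frames, updates the bound expression of a let-frame
(Var), and pushes argument and demand frames that are popped again when the subcomputation
returns, with nothing but let-frames left above them. Hence the final heap arises from the
initial one by matching frames one by one and inserting let-frames (`HeapGrows`), and the
injection of `HpLe` is built frame by frame along such a matching. -/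

theorem Frame.IsLet.exists_eq {F : Frame} (hF : F.IsLet) : ∃ x M, F = .letF x M := by
  cases F with
  | letF x M => exact ⟨x, M, rfl⟩
  | appF | demF => exact hF.elim

namespace FrameMatch

theorem refl (F : Frame) : FrameMatch F F := Or.inl rfl

theorem trans {F G H : Frame} (h₁ : FrameMatch F G) (h₂ : FrameMatch G H) :
    FrameMatch F H := by
  rcases h₁ with rfl | ⟨x, M, N, rfl, rfl⟩
  · exact h₂
  · rcases h₂ with rfl | ⟨y, P, Q, hy, rfl⟩
    · exact Or.inr ⟨x, M, N, rfl, rfl⟩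
    · cases hy
      exact Or.inr ⟨x, M, Q, rfl, rfl⟩

theorem isLet {F F' : Frame} (h : FrameMatch F F') (hF : F.IsLet) : F'.IsLet := by
  rcases h with rfl | ⟨x, M, N, -, rfl⟩
  exacts [hF, trivial]

theorem eq_of_not_isLet {F F' : Frame} (h : FrameMatch F F') (hF : ¬ F.IsLet) : F = F' := by
  rcases h with h | ⟨x, M, N, rfl, -⟩
  exacts [h, absurd trivial hF]

end FrameMatch

namespace HpLe

theorem nil : HpLe [] [] :=
  ⟨Fin.elim0, fun i => i.elim0, fun i => i.elim0, fun j => j.elim0⟩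

theorem cons {F F' : Frame} {S S' : SHeap} (hF : FrameMatch F F') (h : HpLe S S') :
    HpLe (F :: S) (F' :: S') := by
  obtain ⟨ι, hmono, hmatch, hnew⟩ := h
  refine ⟨Fin.cons 0 (Fin.succ ∘ ι),
    Fin.strictMono_cons.2 ⟨fun _ => Fin.succ_pos _, Fin.strictMono_succ.comp hmono⟩,
    Fin.forall_fin_succ.2 ⟨hF, fun i => by simpa using hmatch i⟩, fun j hj => ?_⟩
  cases j using Fin.cases with
  | zero => exact absurd rfl (hj 0)
  | succ k => simpa using hnew k fun i hi => hj i.succ (by simp [hi])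

theorem letF_cons {S S' : SHeap} (x : ℕ) (M : Expr) (h : HpLe S S') :
    HpLe S (.letF x M :: S') := by
  obtain ⟨ι, hmono, hmatch, hnew⟩ := h
  refine ⟨Fin.succ ∘ ι, Fin.strictMono_succ.comp hmono, fun i => by simpa using hmatch i,
    fun j hj => ?_⟩
  cases j using Fin.cases with
  | zero => exact ⟨x, M, rfl⟩
  | succ k => simpa using hnew k fun i hi => hj i (by simp [hi])

end HpLe

inductive HeapGrows : SHeap → SHeap → Prop
  | nil : HeapGrows [] []
  | cons {F F' : Frame} {S S' : SHeap} :
      FrameMatch F F' → HeapGrows S S' → HeapGrows (F :: S) (F' :: S')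
  | letF_cons {S S' : SHeap} (x : ℕ) (M : Expr) : HeapGrows S S' → HeapGrows S (.letF x M :: S')

namespace HeapGrows

theorem hpLe {S S' : SHeap} (h : HeapGrows S S') : HpLe S S' := by
  induction h with
  | nil => exact HpLe.nil
  | cons hF _ ih => exact ih.cons hF
  | letF_cons x M _ ih => exact ih.letF_cons x M

theorem refl : ∀ S : SHeap, HeapGrows S S
  | [] => nil
  | F :: S => cons (FrameMatch.refl F) (refl S)

theorem trans {S S' S'' : SHeap} (h₁ : HeapGrows S S') (h₂ : HeapGrows S' S'') :
    HeapGrows S S'' := by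
  induction h₂ generalizing S with
  | nil => exact h₁
  | cons hF _ ih =>
    cases h₁ with
    | cons hF' h₁ => exact cons (hF'.trans hF) (ih h₁)
    | letF_cons x M h₁ =>
      obtain ⟨y, N, rfl⟩ := (hF.isLet trivial).exists_eq
      exact letF_cons y N (ih h₁)
  | letF_cons x M _ ih => exact letF_cons x M (ih h₁)

theorem append_left (P : SHeap) {S S' : SHeap} (h : HeapGrows S S') :
    HeapGrows (P ++ S) (P ++ S') := by
  induction P with
  | nil => exact h
  | cons F P ih => exact cons (FrameMatch.refl F) ih

theorem lets_append {Θ S S' : SHeap} (hΘ : IsLets Θ) (h : HeapGrows S S') :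
    HeapGrows S (Θ ++ S') := by
  induction Θ with
  | nil => exact h
  | cons F Θ ih =>
    obtain ⟨x, M, rfl⟩ := (hΘ F List.mem_cons_self).exists_eq
    exact letF_cons x M (ih fun G hG => hΘ G (List.mem_cons_of_mem _ hG))

theorem of_letF_cons {x : ℕ} {M : Expr} {S S' : SHeap} (h : HeapGrows (.letF x M :: S) S') :
    HeapGrows S S' := by
  generalize hT : Frame.letF x M :: S = T at h
  induction h generalizing S with
  | nil => cases hT
  | cons hF h =>
    cases hT
    obtain ⟨y, N, rfl⟩ := (hF.isLet trivial).exists_eq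
    exact letF_cons y N h
  | letF_cons y N _ ih => exact letF_cons y N (ih hT)

theorem of_cons_lets_cons {F : Frame} {S Θ S' : SHeap} (hF : ¬ F.IsLet) (hΘ : IsLets Θ)
    (h : HeapGrows (F :: S) (Θ ++ F :: S')) : HeapGrows S S' := by
  induction Θ with
  | nil =>
    cases h with
    | cons _ h => exact h
    | letF_cons => exact absurd trivial hF
  | cons G Θ ih =>
    cases h with
    | cons hFG => exact absurd (hFG.eq_of_not_isLet hF ▸ hΘ G List.mem_cons_self) hF
    | letF_cons _ _ h => exact ih (fun G' hG' => hΘ G' (List.mem_cons_of_mem _ hG')) h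

end HeapGrows

theorem IEval.heapGrows {S S' : SHeap} {M V : Expr} (h : IEval S M S' V) : HeapGrows S S' := by
  induction h with
  | lam S => exact HeapGrows.refl S
  | @app S M₁ M₂ S₁ Θ _ _ _ _ _ hΘ _ _ _ ih₁ ih₂ =>
    have hS₁ : HeapGrows S S₁ := HeapGrows.of_cons_lets_cons (F := .appF M₂) id hΘ ih₁
    exact (HeapGrows.lets_append hΘ hS₁).trans (HeapGrows.of_letF_cons ih₂)
  | letin _ _ ih => exact HeapGrows.of_letF_cons ih
  | @var S S₁ S₂ Θ x M V hΘ _ ih =>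
    have hS₂ : HeapGrows S S₂ :=
      HeapGrows.of_cons_lets_cons (F := .demF x (toCtx S₁)) id hΘ ih
    exact HeapGrows.append_left S₁ (.cons (Or.inr ⟨x, M, V, rfl, rfl⟩) (.lets_append hΘ hS₂))

theorem ieval_heap_grows_general {S S' : SHeap} {M V : Expr}
    (h : IEval S M S' V) : HpLe S S' :=
  h.heapGrows.hpLe

/-- Structured heaps only grow along derivations of the instrumented natural
semantics. -/
theorem ieval_heap_grows {S S' : SHeap} {M V : Expr}
    (hwf : ConfigWF S M) (h : IEval S M S' V) : HpLe S S' :=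
  ieval_heap_grows_general h
end

section
/- Correctness of the natural semantics of λ_let with respect to the instrumented natural semantics: if ⟨Ψ⟩M is closed and X-good and ⟨Ψ⟩M ⇓_X ⟨Φ⟩V, then for every structured heap Σ with ⟦Σ⟧ = Ψ (the flattening of Σ into an ordered heap of let-bindings) such that ⟨Σ⟩M is well-formed, there exists Σ' with ⟨Σ⟩M ⇓ ⟨Σ'⟩V in the instrumented natural semantics and ⟦Σ'⟧ = Φ. -/
open Expr

/-! Induction on the derivation of `⟨Ψ⟩M ⇓_X ⟨Φ⟩V`, following the structured heap along
`decomp`. The one non-trivial point is the shape of the heap returned by an instrumented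
evaluation started under an application or demand frame `F`: it is `Θ ++ F :: S₂` for a run
`Θ` of let-frames. This holds because instrumented evaluation only inserts and updates
let-frames, so the sequence of non-let frames is invariant. -/

def nonLets : SHeap → SHeap
  | [] => []
  | .letF _ _ :: S => nonLets S
  | F :: S => F :: nonLets S

lemma nonLets_append (A B : SHeap) : nonLets (A ++ B) = nonLets A ++ nonLets B := by
  induction A with
  | nil => rfl
  | cons F A ih => cases F <;> simp [nonLets, ih]

lemma nonLets_lets_append {Θ : SHeap} (hΘ : IsLets Θ) (S : SHeap) :
    nonLets (Θ ++ S) = nonLets S := by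
  induction Θ with
  | nil => rfl
  | cons F Θ ih =>
    cases F with
    | letF x M => exact ih fun G hG => hΘ G (List.mem_cons_of_mem _ hG)
    | _ => exact (hΘ _ List.mem_cons_self).elim

lemma eq_lets_append_of_nonLets_eq_cons {S T : SHeap} {F : Frame}
    (h : nonLets S = F :: T) :
    ∃ Θ S₂, IsLets Θ ∧ S = Θ ++ F :: S₂ ∧ nonLets S₂ = T := by
  induction S with
  | nil => cases h
  | cons G S ih =>
    cases G with
    | letF x M =>
      obtain ⟨Θ, S₂, hΘ, rfl, hS₂⟩ := ih h
      refine ⟨.letF x M :: Θ, S₂, ?_, rfl, hS₂⟩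
      rintro G (_ | ⟨_, hG⟩)
      exacts [trivial, hΘ G hG]
    | _ =>
      obtain ⟨rfl, rfl⟩ := List.cons.inj h
      exact ⟨[], S, fun _ hG => (List.not_mem_nil hG).elim, rfl, rfl⟩

lemma IEval.nonLets_eq {S S' : SHeap} {M V : Expr} (h : IEval S M S' V) :
    nonLets S' = nonLets S := by
  induction h with
  | lam => rfl
  | app hΘ _ _ _ ih₁ ih₂ =>
    rw [nonLets_lets_append hΘ] at ih₁
    rw [ih₂, nonLets, nonLets_lets_append hΘ]
    simpa [nonLets] using ih₁
  | letin _ _ ih => exact ih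
  | var hΘ _ ih =>
    rw [nonLets_lets_append hΘ] at ih
    simp only [nonLets_append, nonLets, nonLets_lets_append hΘ] at ih ⊢
    rw [List.cons.inj ih |>.2]

lemma IEval.eq_lets_append {F : Frame} {S S' : SHeap} {M V : Expr} (hF : ¬ F.IsLet)
    (h : IEval (F :: S) M S' V) : ∃ Θ S₂, IsLets Θ ∧ S' = Θ ++ F :: S₂ := by
  have hS' : nonLets S' = F :: nonLets S := by
    rw [h.nonLets_eq]
    cases F <;> first | exact (hF trivial).elim | rfl
  obtain ⟨Θ, S₂, hΘ, rfl, -⟩ := eq_lets_append_of_nonLets_eq_cons hS'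
  exact ⟨Θ, S₂, hΘ, rfl⟩

lemma decomp_append (A B : SHeap) : decomp (A ++ B) = decomp B ++ decomp A := by
  induction A with
  | nil => simp [decomp]
  | cons F A ih => cases F <;> simp [decomp, ih]

lemma decomp_append_cons {F : Frame} (hF : ¬ F.IsLet) (A B : SHeap) :
    decomp (A ++ F :: B) = decomp (A ++ B) := by
  rw [decomp_append, decomp_append]
  cases F
  · rfl
  · exact (hF trivial).elim
  · rfl

lemma slbv_cons (F : Frame) (S : SHeap) : slbv (F :: S) = F.lbv ∪ slbv S := rfl

lemma heapDom_decomp (S : SHeap) : heapDom (decomp S) = slbv S := by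
  induction S with
  | nil => rfl
  | cons F S ih =>
    cases F <;> simp [decomp, slbv_cons, Frame.lbv, heapDom, ← ih]

lemma exists_eq_append_letF_of_decomp_eq {S : SHeap} {Ψ Φ : Heap} {x : ℕ} {M : Expr}
    (h : decomp S = Ψ ++ (x, M) :: Φ) :
    ∃ S₁ S₀, S = S₁ ++ .letF x M :: S₀ ∧ decomp S₁ = Φ ∧ decomp S₀ = Ψ := by
  induction S generalizing Φ with
  | nil => simp [decomp] at h
  | cons F S ih =>
    cases F with
    | letF y N =>
      rcases List.eq_nil_or_concat Φ with rfl | ⟨Φ', p, rfl⟩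
      · obtain ⟨hS, ⟨rfl, rfl⟩⟩ : decomp S = Ψ ∧ (y, N) = (x, M) := by
          simpa [decomp] using h
        exact ⟨[], S, rfl, rfl, hS⟩
      · rw [decomp, List.concat_eq_append, ← List.cons_append, ← List.append_assoc] at h
        obtain ⟨hS, hp⟩ := List.append_inj' h rfl
        obtain rfl : (y, N) = p := List.head_eq_of_cons_eq hp
        obtain ⟨S₁, S₀, rfl, h₁, h₀⟩ := ih hS
        exact ⟨.letF y N :: S₁, S₀, rfl, by simp [decomp, h₁], h₀⟩
    | _ =>
      obtain ⟨S₁, S₀, rfl, h₁, h₀⟩ := ih h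
      exact ⟨_ :: S₁, S₀, rfl, h₁, h₀⟩

theorem Eval.exists_ieval {Ψ Φ : Heap} {M V : Expr} {X : Finset ℕ} (h : Eval Ψ M X Φ V)
    (S : SHeap) (hS : decomp S = Ψ) : ∃ S', IEval S M S' V ∧ decomp S' = Φ := by
  induction h generalizing S with
  | lam Ψ x M X => exact ⟨S, IEval.lam S x M, hS⟩
  | @app Ψ M₁ M₂ X Φ x N x' Ψ' V _ hx _ ih₁ ih₂ =>
    obtain ⟨S', hI₁, hd₁⟩ := ih₁ (.appF M₂ :: S) hS
    obtain ⟨Θ, S₁, hΘ, rfl⟩ := hI₁.eq_lets_append (F := .appF M₂) id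
    rw [decomp_append_cons id] at hd₁
    have hx' : x' ∉ slbv (Θ ++ S₁) ∪ FV M₂ ∪ FV N := by
      rw [← heapDom_decomp, hd₁]
      simp only [Finset.mem_union, not_or] at hx ⊢
      tauto
    obtain ⟨S₂, hI₂, hd₂⟩ := ih₂ (.letF x' M₂ :: (Θ ++ S₁)) (by rw [decomp, hd₁])
    exact ⟨S₂, IEval.app hΘ hI₁ hx' hI₂, hd₂⟩
  | @letE Ψ x N M X x' Φ V hx _ ih =>
    have hx' : x' ∉ slbv S ∪ FV N ∪ FV M := by
      rw [← heapDom_decomp, hS]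
      simp only [Finset.mem_union, not_or] at hx ⊢
      tauto
    obtain ⟨S', hI, hd⟩ := ih (.letF x' N :: S) (by rw [decomp, hS])
    exact ⟨S', IEval.letin hx' hI, hd⟩
  | @var Ψ M X Φ Ψ' V x _ ih =>
    obtain ⟨S₁, S₀, rfl, hd₁, hd₀⟩ := exists_eq_append_letF_of_decomp_eq hS
    obtain ⟨S', hI, hd⟩ := ih (.demF x (toCtx S₁) :: S₀) hd₀
    obtain ⟨Θ, S₂, hΘ, rfl⟩ := hI.eq_lets_append (F := .demF x (toCtx S₁)) id
    rw [decomp_append_cons id] at hd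
    refine ⟨S₁ ++ .letF x V :: (Θ ++ S₂), IEval.var hΘ hI, ?_⟩
    simp [decomp_append, decomp, hd, hd₁]

theorem eval_implies_ieval_general {Ψ Φ : Heap} {M V : Expr} {X : Finset ℕ}
    (h : Eval Ψ M X Φ V) :
    ∀ S : SHeap, decomp S = Ψ → ConfigWF S M →
      ∃ S' : SHeap, IEval S M S' V ∧ decomp S' = Φ :=
  fun S hS _ => h.exists_ieval S hS

/-- Correctness of the natural semantics w.r.t. the instrumented natural
semantics of λ_let. -/
theorem eval_implies_ieval {Ψ Φ : Heap} {M V : Expr} {X : Finset ℕ}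
    (hclosed : ConfigClosed Ψ M) (hgood : ConfigGood Ψ X)
    (h : Eval Ψ M X Φ V) :
    ∀ S : SHeap, decomp S = Ψ → ConfigWF S M →
      ∃ S' : SHeap, IEval S M S' V ∧ decomp S' = Φ :=
  eval_implies_ieval_general h
end

section
/- Function-position reduction lemma for λ_let: if Θ[M N] is a program, Θ[M N] →ⁿ Θ'[V N], and the reduction sequence preserves a β_need-root with argument N (no step in the sequence is a β_need reduction of an application whose argument is N at the root position), then Θ[M] →ⁿ' Θ'[V] for some n' ≤ n. -/
open Expr

/-! A step of `Θ[M N]` that is not a β_need step at the root with argument `N` is mirrored by at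
most one step of `Θ[M]`. If the redex lies inside `M`, or is a `deref`/`assoc` whose demanded
variable is demanded from inside `M`, the same step applies to `Θ[M]`; the demand travels through
the function position since `E[x] = Θ[M N]` forces the hole of `E` to sit in `M` or in a binding
of `Θ`. The only other possibility is a `lift` of a let out of the function position,
`Θ[(let x = Q in A) N] ↦ Θ[let x = Q in A N]`, which leaves `Θ[M]` unchanged once `let x = Q`
is counted as part of the nesting. -/

theorem tplug_append (Θ Θ' : LetNest) (M : Expr) : tplug (Θ ++ Θ') M = tplug Θ' (tplug Θ M) := by
  induction Θ generalizing M with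
  | nil => rfl
  | cons p Θ ih => exact ih _

theorem Step.letE (x : ℕ) (Q : Expr) {A B : Expr} (h : Step A B) :
    Step (.letE x Q A) (.letE x Q B) := by
  obtain ⟨E, r, r', hr, rfl, rfl⟩ := h
  exact ⟨.letB x Q E, r, r', hr, rfl, rfl⟩

theorem Redex.step {r r' : Expr} (h : Redex r r') : Step r r' := ⟨.hole, r, r', h, rfl, rfl⟩

theorem BetaRooted.letE {N T U : Expr} (x : ℕ) (Q : Expr) (h : BetaRooted N T U) :
    BetaRooted N (.letE x Q T) (.letE x Q U) := by
  obtain ⟨Θ, y, N', rfl, rfl⟩ := h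
  exact ⟨Θ ++ [(x, Q)], y, N', by rw [tplug_append]; rfl, by rw [tplug_append]; rfl⟩

/-- `StripArg N (Θ[M N]) (Θ[M])`. -/
inductive StripArg (N : Expr) : Expr → Expr → Prop
  | app (M : Expr) : StripArg N (.app M N) M
  | letE (x : ℕ) (Q : Expr) {T T' : Expr} : StripArg N T T' → StripArg N (.letE x Q T) (.letE x Q T')

namespace StripArg

variable {N : Expr}

@[simp]
theorem app_iff {M N₀ T' : Expr} : StripArg N (.app M N₀) T' ↔ N₀ = N ∧ T' = M := by
  constructor
  · rintro ⟨⟩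
    exact ⟨rfl, rfl⟩
  · rintro ⟨rfl, rfl⟩
    exact .app _

@[simp]
theorem letE_iff {x : ℕ} {Q T T' : Expr} :
    StripArg N (.letE x Q T) T' ↔ ∃ T'', T' = .letE x Q T'' ∧ StripArg N T T'' := by
  constructor
  · rintro ⟨⟩
    exact ⟨_, rfl, ‹_›⟩
  · rintro ⟨T'', rfl, hT''⟩
    exact hT''.letE x Q

theorem not_var {y : ℕ} {T' : Expr} : ¬ StripArg N (.var y) T' := nofun

theorem unique {T T₁ T₂ : Expr} (h₁ : StripArg N T T₁) (h₂ : StripArg N T T₂) : T₁ = T₂ := by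
  induction h₁ generalizing T₂ with
  | app M => exact ((app_iff.mp h₂).2).symm
  | letE x Q _ ih =>
    obtain ⟨T'', rfl, h⟩ := letE_iff.mp h₂
    rw [ih h]

theorem tplug {T T' : Expr} (h : StripArg N T T') :
    ∀ Θ : LetNest, StripArg N (tplug Θ T) (tplug Θ T')
  | [] => h
  | (x, Q) :: Θ => (h.letE x Q).tplug Θ

/-- Demand flows through the function position. -/
theorem exists_ctx_of_plug_var {E : Ctx} {y : ℕ} {T' : Expr}
    (h : StripArg N (E.plug (.var y)) T') :
    ∃ E' : Ctx, ∀ X, StripArg N (E.plug X) (E'.plug X) := by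
  induction E generalizing y T' with
  | hole => exact (not_var h).elim
  | appL E₁ N₁ =>
    obtain ⟨rfl, -⟩ := app_iff.mp h
    exact ⟨E₁, fun X => .app _⟩
  | letB x Q E₁ ih =>
    obtain ⟨T'', -, hT''⟩ := letE_iff.mp h
    obtain ⟨E₁', hE₁'⟩ := ih hT''
    exact ⟨.letB x Q E₁', fun X => (hE₁' X).letE x Q⟩
  | letD x E₁ E₂ _ ih₂ =>
    obtain ⟨T'', -, hT''⟩ := letE_iff.mp h
    obtain ⟨E₂', hE₂'⟩ := ih₂ hT''
    exact ⟨.letD x E₁ E₂', fun X => (hE₂' (.var x)).letE x _⟩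

theorem exists_ctx_of_letE_plug_var {x : ℕ} {P T' : Expr} {E : Ctx}
    (h : StripArg N (.letE x P (E.plug (.var x))) T') :
    ∃ E' : Ctx, T' = .letE x P (E'.plug (.var x)) ∧ ∀ X, StripArg N (E.plug X) (E'.plug X) := by
  obtain ⟨T'', rfl, hT''⟩ := letE_iff.mp h
  obtain ⟨E', hE'⟩ := exists_ctx_of_plug_var hT''
  exact ⟨E', by rw [hT''.unique (hE' _)], hE'⟩

theorem step_of_redex {r r' T' : Expr} (hr : Redex r r') (h : StripArg N r T')
    (hβ : ¬ BetaRooted N r r') : ∃ U', StripArg N r' U' ∧ Relation.ReflGen Step T' U' := by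
  cases hr with
  | beta x M N₀ =>
    obtain ⟨rfl, rfl⟩ := app_iff.mp h
    exact (hβ ⟨[], x, M, rfl, rfl⟩).elim
  | lift x Q A N₀ hA =>
    obtain ⟨rfl, rfl⟩ := app_iff.mp h
    exact ⟨_, (StripArg.app A).letE x Q, .refl⟩
  | deref x V E hV =>
    obtain ⟨E', rfl, hE'⟩ := exists_ctx_of_letE_plug_var h
    exact ⟨_, (hE' V).letE x V, .single (Redex.deref x V E' hV).step⟩
  | assoc x y Q A E hA =>
    obtain ⟨E', rfl, hE'⟩ := exists_ctx_of_letE_plug_var h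
    exact ⟨_, ((hE' _).letE x A).letE y Q, .single (Redex.assoc x y Q A E' hA).step⟩

theorem step_of_step {T U T' : Expr} (hs : Step T U) (h : StripArg N T T')
    (hβ : ¬ BetaRooted N T U) : ∃ U', StripArg N U U' ∧ Relation.ReflGen Step T' U' := by
  obtain ⟨E, r, r', hr, rfl, rfl⟩ := hs
  induction E generalizing T' with
  | hole => exact h.step_of_redex hr hβ
  | appL E₁ N₁ =>
    obtain ⟨rfl, rfl⟩ := app_iff.mp h
    exact ⟨_, .app _, .single ⟨E₁, r, r', hr, rfl, rfl⟩⟩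
  | letB x Q E₁ ih =>
    obtain ⟨T'', rfl, hT''⟩ := letE_iff.mp h
    obtain ⟨U', hU', hstep⟩ := ih hT'' fun hβ' => hβ (hβ'.letE x Q)
    refine ⟨_, hU'.letE x Q, ?_⟩
    cases hstep with
    | refl => exact .refl
    | single hs => exact .single (hs.letE x Q)
  | letD x E₁ E₂ =>
    obtain ⟨E₂', rfl, hE₂'⟩ := exists_ctx_of_letE_plug_var h
    exact ⟨_, (hE₂' _).letE x _, .single ⟨.letD x E₁ E₂', r, r', hr, rfl, rfl⟩⟩

end StripArg

theorem StepNAvoid.stepN_of_stripArg {N : Expr} :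
    ∀ {n : ℕ} {T W T' W' : Expr}, StepNAvoid N n T W → StripArg N T T' → StripArg N W W' →
      ∃ n' ≤ n, StepN n' T' W'
  | 0, _, _, _, _, rfl, hT, hW => ⟨0, le_rfl, hT.unique hW⟩
  | n + 1, _, _, _, _, ⟨U, hs, hβ, hrest⟩, hT, hW => by
    obtain ⟨U', hU', hstep⟩ := hT.step_of_step hs hβ
    obtain ⟨n', hn', hsteps⟩ := stepN_of_stripArg hrest hU' hW
    cases hstep with
    | refl => exact ⟨n', by omega, hsteps⟩
    | single hs' => exact ⟨n' + 1, by omega, U', hs', hsteps⟩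

theorem red_app_lemma_general
    (Θ Θ' : LetNest) (M N V : Expr) (n : ℕ)
    (hred : StepNAvoid N n (tplug Θ (.app M N)) (tplug Θ' (.app V N))) :
    ∃ n' ≤ n, StepN n' (tplug Θ M) (tplug Θ' V) :=
  hred.stepN_of_stripArg ((StripArg.app M).tplug Θ) ((StripArg.app V).tplug Θ')

/-- Function-position reduction lemma for λ_let. -/
theorem red_app_lemma
    (Θ Θ' : LetNest) (M N V : Expr) (n : ℕ)
    (hprog : Closed (tplug Θ (.app M N))) (hV : IsValue V)
    (hred : StepNAvoid N n (tplug Θ (.app M N)) (tplug Θ' (.app V N))) :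
    ∃ n' ≤ n, StepN n' (tplug Θ M) (tplug Θ' V) :=
  red_app_lemma_general Θ Θ' M N V n hred
end
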